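/- arXiv:2511.13229 — 3 statements merged into one kernel-verified Lean document; each statement's English description precedes it below -/
import Mathlib

section
/- Let (A,d) be a metric space and p ≥ 1. Let (f_n,P_n) ∈ TL^p(A) for each n and (f,P) ∈ TL^p(A). Then d_TL((f_n,P_n),(f,P)) → 0 as n → ∞ if and only if there exists a sequence of transport plans π_n ∈ Π(P,P_n) such that ∫_{A×A} d(x,y)^p dπ_n(x,y) → 0 and ∫_{A×A} |f(x) − f_n(y)|^p dπ_n(x,y) → 0 as n → ∞. -/
open MeasureTheory ProbabilityTheory Filter Set Metric
open scoped ENNReal NNReal Topology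

noncomputable section

/-- The set of couplings (transport plans) between two measures. -/
def Coupling {α : Type*} [MeasurableSpace α] (P Q : Measure α) : Set (Measure (α × α)) :=
  {π | IsProbabilityMeasure π ∧ π.map Prod.fst = P ∧ π.map Prod.snd = Q}

/-- The `p`-Wasserstein distance between measures on `EuclideanSpace ℝ (Fin k)`. -/
def Wp {k : ℕ} (p : ℝ) (μ ν : Measure (EuclideanSpace ℝ (Fin k))) : ℝ :=
  (⨅ π ∈ Coupling μ ν, ∫⁻ z, ENNReal.ofReal (dist z.1 z.2 ^ p) ∂π).toReal ^ (1 / p)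

/-- The `∞`-Wasserstein distance. -/
def Winf {k : ℕ} (μ ν : Measure (EuclideanSpace ℝ (Fin k))) : ℝ≥0∞ :=
  ⨅ π ∈ Coupling μ ν,
    essSup (fun z : EuclideanSpace ℝ (Fin k) × EuclideanSpace ℝ (Fin k) =>
      ENNReal.ofReal (dist z.1 z.2)) π

/-- Empirical measure of the first `m` samples. -/
def empiric {α : Type*} [MeasurableSpace α] (m : ℕ) (x : ℕ → α) : Measure α :=
  (m : ℝ≥0∞)⁻¹ • ∑ i ∈ Finset.range m, Measure.dirac (x i)

/-- The rate `q_k(m)` for the `∞`-Wasserstein distance between a measure and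
its empirical approximation. -/
def qk (k m : ℕ) : ℝ :=
  if k = 1 then Real.sqrt (Real.log (Real.log m) / m)
  else if k = 2 then Real.log m ^ ((3 : ℝ) / 4) / Real.sqrt m
  else (Real.log m / m) ^ ((1 : ℝ) / k)

/-- The rate `q̃_k(m)` for the `2`-Wasserstein distance between a measure and
its empirical approximation. -/
def qtilde (k m : ℕ) : ℝ :=
  if k = 1 then Real.sqrt (Real.log m / m)
  else if k = 2 then Real.log m ^ ((3 : ℝ) / 4) / Real.sqrt m
  else if k = 3 then (Real.log m / m) ^ ((1 : ℝ) / 3)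
  else if k = 4 then Real.sqrt (Real.log m) / (m : ℝ) ^ ((1 : ℝ) / 4)
  else (m : ℝ) ^ (-(1 : ℝ) / k)

/-- The transportation `L^p` distance between the pairs `(f, P)` and `(g, Q)` over
the ground distance `dA`. -/
def dTL {A : Type*} [MeasurableSpace A] (p : ℝ) (dA : A → A → ℝ)
    (f : A → ℝ) (P : Measure A) (g : A → ℝ) (Q : Measure A) : ℝ≥0∞ :=
  ⨅ π ∈ Coupling P Q,
    (∫⁻ z, ENNReal.ofReal (dA z.1 z.2 ^ p + |f z.1 - g z.2| ^ p) ∂π) ^ (1 / p)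

/-- Membership in the Hajłasz–Sobolev space over the domain `D ⊆ A` with ground
distance `dA` and reference measure `μ`. -/
def MemHajlaszOn {A : Type*} [MeasurableSpace A] (p : ℝ) (dA : A → A → ℝ)
    (D : Set A) (μ : Measure A) (f : A → ℝ) : Prop :=
  MemLp f (ENNReal.ofReal p) μ ∧
    ∃ g : A → ℝ, (∀ x, 0 ≤ g x) ∧ MemLp g (ENNReal.ofReal p) μ ∧
      ∃ N : Set A, μ N = 0 ∧
        ∀ x ∈ D \ N, ∀ y ∈ D \ N, |f x - f y| ≤ dA x y * (g x + g y)

/-- `Ω` has Lipschitz boundary: near every boundary point, `Ω` is (up to a choice of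
unit direction `u`) the open epigraph of a Lipschitz function on the orthogonal
hyperplane. -/
def HasLipschitzBoundary {k : ℕ} (Ω : Set (EuclideanSpace ℝ (Fin k))) : Prop :=
  ∀ x ∈ frontier Ω, ∃ (u : EuclideanSpace ℝ (Fin k)) (Lphi : ℝ≥0)
    (φ : EuclideanSpace ℝ (Fin k) → ℝ) (r : ℝ),
      0 < r ∧ ‖u‖ = 1 ∧ LipschitzWith Lphi φ ∧
      ∀ y ∈ Metric.ball x r, (y ∈ Ω ↔ φ (y - (inner ℝ y u : ℝ) • u) < (inner ℝ y u : ℝ))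

/-- `Ω` has smooth boundary: near every boundary point, `Ω` is (up to a choice of
unit direction `u`) the open epigraph of a smooth function on the orthogonal
hyperplane. -/
def HasSmoothBoundary {k : ℕ} (Ω : Set (EuclideanSpace ℝ (Fin k))) : Prop :=
  ∀ x ∈ frontier Ω, ∃ (u : EuclideanSpace ℝ (Fin k))
    (φ : EuclideanSpace ℝ (Fin k) → ℝ) (r : ℝ),
      0 < r ∧ ‖u‖ = 1 ∧ ContDiff ℝ (⊤ : ℕ∞) φ ∧
      ∀ y ∈ Metric.ball x r, (y ∈ Ω ↔ φ (y - (inner ℝ y u : ℝ) • u) < (inner ℝ y u : ℝ))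

/-- `V` is a weak gradient of `f` on the open set `S`. -/
def HasWeakGradOn {d : ℕ} (f : EuclideanSpace ℝ (Fin d) → ℝ)
    (V : EuclideanSpace ℝ (Fin d) → EuclideanSpace ℝ (Fin d))
    (S : Set (EuclideanSpace ℝ (Fin d))) : Prop :=
  ∀ φ : EuclideanSpace ℝ (Fin d) → ℝ, ContDiff ℝ (⊤ : ℕ∞) φ → HasCompactSupport φ →
    tsupport φ ⊆ S →
    ∀ v : EuclideanSpace ℝ (Fin d),
      ∫ θ in S, f θ * fderiv ℝ φ θ v = -∫ θ in S, (inner ℝ (V θ) v : ℝ) * φ θ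

/-- `f ∈ W^{1,p}(S)` with weak gradient `V`. -/
def SobolevRep {d : ℕ} (p : ℝ) (S : Set (EuclideanSpace ℝ (Fin d)))
    (f : EuclideanSpace ℝ (Fin d) → ℝ)
    (V : EuclideanSpace ℝ (Fin d) → EuclideanSpace ℝ (Fin d)) : Prop :=
  MemLp f (ENNReal.ofReal p) (volume.restrict S) ∧
    MemLp V (ENNReal.ofReal p) (volume.restrict S) ∧
    HasWeakGradOn f V S

/-- The continuum `p`-Dirichlet energy with weight `w`, equal to `+∞` outside of
`W^{1,p}(S)`. -/
def contEnergy {d : ℕ} (p : ℝ) (S : Set (EuclideanSpace ℝ (Fin d)))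
    (ρS : EuclideanSpace ℝ (Fin d) → ℝ)
    (w : EuclideanSpace ℝ (Fin d) → EuclideanSpace ℝ (Fin d) → ℝ)
    (f : EuclideanSpace ℝ (Fin d) → ℝ) : ℝ≥0∞ :=
  letI := Classical.propDecidable (∃ V, SobolevRep p S f V)
  if hf : ∃ V, SobolevRep p S f V then
    ∫⁻ h, ∫⁻ θ in S,
      ENNReal.ofReal (|(inner ℝ (hf.choose θ) h : ℝ)| ^ p * w θ h * ρS θ ^ 2) ∂volume ∂volume
  else ⊤

/-- `(f, P)` is an element of `TL^p(A)`. -/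
def MemTL {A : Type*} [MeasurableSpace A] (p : ℝ) (f : A → ℝ) (P : Measure A) : Prop :=
  IsProbabilityMeasure P ∧ Measurable f ∧ MemLp f (ENNReal.ofReal p) P

lemma coupling_swap {α : Type*} [MeasurableSpace α] {P Q : Measure α} {π : Measure (α × α)}
    (h : π ∈ Coupling P Q) : π.map Prod.swap ∈ Coupling Q P := by
  obtain ⟨h1, h2, h3⟩ := h
  refine ⟨@Measure.isProbabilityMeasure_map _ _ _ _ _ h1 _ measurable_swap.aemeasurable, ?_, ?_⟩
  · rw [Measure.map_map measurable_fst measurable_swap]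
    exact h3
  · rw [Measure.map_map measurable_snd measurable_swap]
    exact h2

lemma coupling_prod {α : Type*} [MeasurableSpace α] (P Q : Measure α)
    [IsProbabilityMeasure P] [IsProbabilityMeasure Q] : P.prod Q ∈ Coupling P Q := by
  refine ⟨by infer_instance, ?_, ?_⟩ <;> simp

/-- `TL^p` convergence is characterized by the existence of transport plans
along which both the ground distance and the function discrepancy vanish asymptotically. -/
theorem dTL_tendsto_iff_exists_plans
    {A : Type*} [MeasurableSpace A] [MetricSpace A] [BorelSpace A]
    (p : ℝ) (hp : 1 ≤ p)
    (f : A → ℝ) (P : Measure A) (fn : ℕ → A → ℝ) (Pn : ℕ → Measure A)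
    (hfP : MemTL p f P) (hfn : ∀ n, MemTL p (fn n) (Pn n)) :
    Tendsto (fun n => dTL p (fun x y => dist x y) (fn n) (Pn n) f P) atTop (𝓝 0) ↔
      ∃ π : ℕ → Measure (A × A), (∀ n, π n ∈ Coupling P (Pn n)) ∧
        Tendsto (fun n => ∫⁻ z, ENNReal.ofReal (dist z.1 z.2 ^ p) ∂π n) atTop (𝓝 0) ∧
        Tendsto (fun n => ∫⁻ z, ENNReal.ofReal (|f z.1 - fn n z.2| ^ p) ∂π n)
          atTop (𝓝 0) := by
  have hp0 : (0:ℝ) < p := lt_of_lt_of_le one_pos hp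
  have hpne : p ≠ 0 := ne_of_gt hp0
  have hP : IsProbabilityMeasure P := hfP.1
  have hmf : Measurable f := hfP.2.1
  have mG : ∀ n, Measurable fun z : A × A => |f z.1 - fn n z.2| ^ p := fun n =>
    (((hmf.comp measurable_fst).sub ((hfn n).2.1.comp measurable_snd)).abs).pow_const p
  have swap_lint : ∀ (μ : Measure (A × A)) (g : A × A → ℝ≥0∞),
      ∫⁻ z, g z ∂(μ.map Prod.swap) = ∫⁻ z, g z.swap ∂μ := fun μ g =>
    lintegral_map_equiv g (MeasurableEquiv.prodComm : A × A ≃ᵐ A × A)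
  constructor
  · intro h
    have key : ∀ n : ℕ, ∃ π ∈ Coupling (Pn n) P,
        (∫⁻ z, ENNReal.ofReal (dist z.1 z.2 ^ p + |fn n z.1 - f z.2| ^ p) ∂π) ^ (1 / p)
          ≤ dTL p (fun x y => dist x y) (fn n) (Pn n) f P + ((n : ℝ≥0∞) + 1)⁻¹ := by
      intro n
      have hPn : IsProbabilityMeasure (Pn n) := (hfn n).1
      by_cases htop : dTL p (fun x y => dist x y) (fn n) (Pn n) f P = ⊤
      · exact ⟨(Pn n).prod P, coupling_prod _ _, by simp [htop]⟩
      · have hlt : dTL p (fun x y => dist x y) (fn n) (Pn n) f P <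
            dTL p (fun x y => dist x y) (fn n) (Pn n) f P + ((n : ℝ≥0∞) + 1)⁻¹ :=
          ENNReal.lt_add_right htop (by simp)
        conv_lhs at hlt => rw [dTL]
        rw [iInf_lt_iff] at hlt
        obtain ⟨π, hπ⟩ := hlt
        rw [iInf_lt_iff] at hπ
        obtain ⟨hmem, hval⟩ := hπ
        exact ⟨π, hmem, hval.le⟩
    choose σ hσmem hσle using key
    set F : ℕ → ℝ≥0∞ := fun n =>
      ∫⁻ z, ENNReal.ofReal (dist z.1 z.2 ^ p + |fn n z.1 - f z.2| ^ p) ∂σ n with hF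
    have hFle : ∀ n, F n ≤
        (dTL p (fun x y => dist x y) (fn n) (Pn n) f P + ((n : ℝ≥0∞) + 1)⁻¹) ^ p := by
      intro n
      have h2 := ENNReal.rpow_le_rpow (hσle n) hp0.le
      rwa [← ENNReal.rpow_mul, one_div, inv_mul_cancel₀ hpne, ENNReal.rpow_one] at h2
    have hF0 : Tendsto F atTop (𝓝 0) := by
      have h1 : Tendsto (fun n : ℕ => ((n : ℝ≥0∞) + 1)⁻¹) atTop (𝓝 0) := by
        have h2 := ENNReal.tendsto_inv_nat_nhds_zero.comp (tendsto_add_atTop_nat 1)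
        refine h2.congr fun n => ?_
        simp [Function.comp]
      have hb := (h.add h1).ennrpow_const p
      rw [zero_add, ENNReal.zero_rpow_of_pos hp0] at hb
      exact tendsto_of_tendsto_of_tendsto_of_le_of_le tendsto_const_nhds hb
        (fun n => zero_le) hFle
    refine ⟨fun n => (σ n).map Prod.swap, fun n => coupling_swap (hσmem n), ?_, ?_⟩
    · have hle : ∀ n, (∫⁻ z, ENNReal.ofReal (dist z.1 z.2 ^ p) ∂((σ n).map Prod.swap)) ≤ F n := by
        intro n
        rw [swap_lint]
        refine le_trans (le_of_eq ?_) (lintegral_mono fun z =>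
          ENNReal.ofReal_le_ofReal (le_add_of_nonneg_right (Real.rpow_nonneg (abs_nonneg _) p)))
        simp only [Prod.fst_swap, Prod.snd_swap]
        simp_rw [dist_comm]
      exact tendsto_of_tendsto_of_tendsto_of_le_of_le tendsto_const_nhds hF0
        (fun n => zero_le) hle
    · have hle : ∀ n,
          (∫⁻ z, ENNReal.ofReal (|f z.1 - fn n z.2| ^ p) ∂((σ n).map Prod.swap)) ≤ F n := by
        intro n
        rw [swap_lint]
        refine le_trans (le_of_eq ?_) (lintegral_mono fun z =>
          ENNReal.ofReal_le_ofReal (le_add_of_nonneg_left (Real.rpow_nonneg dist_nonneg p)))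
        simp only [Prod.fst_swap, Prod.snd_swap]
        simp_rw [abs_sub_comm]
      exact tendsto_of_tendsto_of_tendsto_of_le_of_le tendsto_const_nhds hF0
        (fun n => zero_le) hle
  · rintro ⟨π, hmem, h1, h2⟩
    have hub : ∀ n, dTL p (fun x y => dist x y) (fn n) (Pn n) f P ≤
        ((∫⁻ z, ENNReal.ofReal (dist z.1 z.2 ^ p) ∂π n) +
          (∫⁻ z, ENNReal.ofReal (|f z.1 - fn n z.2| ^ p) ∂π n)) ^ (1 / p) := by
      intro n
      have hmem' := coupling_swap (hmem n)
      have hle1 : dTL p (fun x y => dist x y) (fn n) (Pn n) f P ≤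
          (∫⁻ z, ENNReal.ofReal (dist z.1 z.2 ^ p + |fn n z.1 - f z.2| ^ p)
            ∂((π n).map Prod.swap)) ^ (1 / p) := by
        rw [dTL]
        exact biInf_le _ hmem'
      refine hle1.trans (ENNReal.rpow_le_rpow (le_of_eq ?_) (by positivity))
      rw [swap_lint]
      have heq : ∀ z : A × A, ENNReal.ofReal
          (dist z.swap.1 z.swap.2 ^ p + |fn n z.swap.1 - f z.swap.2| ^ p)
          = ENNReal.ofReal (dist z.1 z.2 ^ p) + ENNReal.ofReal (|f z.1 - fn n z.2| ^ p) := by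
        intro z
        simp only [Prod.fst_swap, Prod.snd_swap]
        rw [dist_comm, abs_sub_comm,
          ENNReal.ofReal_add (Real.rpow_nonneg dist_nonneg p)
            (Real.rpow_nonneg (abs_nonneg _) p)]
      calc ∫⁻ z, ENNReal.ofReal (dist z.swap.1 z.swap.2 ^ p + |fn n z.swap.1 - f z.swap.2| ^ p)
            ∂π n
          = ∫⁻ z, (ENNReal.ofReal (dist z.1 z.2 ^ p) + ENNReal.ofReal (|f z.1 - fn n z.2| ^ p))
            ∂π n := by simp_rw [heq]
        _ = _ := lintegral_add_right _ (mG n).ennreal_ofReal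
    have hb : Tendsto (fun n =>
        ((∫⁻ z, ENNReal.ofReal (dist z.1 z.2 ^ p) ∂π n) +
          (∫⁻ z, ENNReal.ofReal (|f z.1 - fn n z.2| ^ p) ∂π n)) ^ (1 / p)) atTop (𝓝 0) := by
      have hb2 := (h1.add h2).ennrpow_const (1 / p)
      rw [zero_add, ENNReal.zero_rpow_of_pos (by positivity)] at hb2
      exact hb2
    exact tendsto_of_tendsto_of_tendsto_of_le_of_le tendsto_const_nhds hb
      (fun n => zero_le) hub
end
end

section
/- Let (A,d) be a metric space and p ≥ 1. Let (f_n,P_n) ∈ TL^p(A) for each n and (f,P) ∈ TL^p(A), and suppose d_TL((f_n,P_n),(f,P)) → 0 as n → ∞. Then for any sequence of transport plans π_n ∈ Π(P,P_n) satisfying ∫_{A×A} d(x,y)^p dπ_n(x,y) → 0, it follows that ∫_{A×A} |f(x) − f_n(y)|^p dπ_n(x,y) → 0 as n → ∞. -/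
open MeasureTheory ProbabilityTheory Filter Set Metric
open scoped ENNReal NNReal Topology

noncomputable section

noncomputable section TLpAux

open MeasureTheory ProbabilityTheory Filter Set Metric
open scoped ENNReal NNReal Topology

variable {A : Type*} [MeasurableSpace A] [MetricSpace A] [BorelSpace A]

/-- Lipschitz approximation of an indicator function in `L^q`. -/
lemma lip_indicator_approx (P : Measure A) [IsFiniteMeasure P] {q : ℝ≥0∞}
    (hq1 : 1 ≤ q) (hqt : q ≠ ∞) (c : ℝ) {S : Set A} (hS : MeasurableSet S)
    {ε : ℝ≥0∞} (hε : ε ≠ 0) :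
    ∃ (L : ℝ≥0) (ℓ : A → ℝ), LipschitzWith L ℓ ∧
      eLpNorm (S.indicator (fun _ => c) - ℓ) q P ≤ ε := by
  have hq0 : q ≠ 0 := (zero_lt_one.trans_le hq1).ne'
  rcases eq_or_ne ε ∞ with rfl | hεt
  · exact ⟨0, 0, LipschitzWith.const' 0, le_top⟩
  rcases eq_or_ne c 0 with rfl | hc
  · exact ⟨0, 0, LipschitzWith.const' 0, by simp⟩
  have hqr : 0 < q.toReal := ENNReal.toReal_pos hq0 hqt
  have hε2 : (ε / 2) ≠ 0 := by simp [ENNReal.div_eq_zero_iff, hε]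
  have hε2t : (ε / 2) ≠ ∞ := by simp [ENNReal.div_eq_top, hεt]
  -- choose a closed subset
  set δ : ℝ≥0∞ := ((ε / 2) / ‖c‖₊) ^ q.toReal with hδdef
  have hcnn : (‖c‖₊ : ℝ≥0∞) ≠ 0 := by simpa using hc
  have hδ0 : δ ≠ 0 := by
    rw [hδdef, Ne, ENNReal.rpow_eq_zero_iff]
    push_neg
    refine ⟨fun h => absurd h (by simp [ENNReal.div_eq_zero_iff, hε2, ENNReal.coe_ne_top]),
      fun h => absurd h (by simp [ENNReal.div_eq_top, hε2, hε2t, hcnn])⟩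
  obtain ⟨F, hFS, hFc, hFlt⟩ := hS.exists_isClosed_diff_lt (measure_ne_top P S) hδ0
  have hkey : (‖c‖₊ : ℝ≥0∞) * δ ^ (1 / q.toReal) = ε / 2 := by
    rw [hδdef, ← ENNReal.rpow_mul, mul_one_div_cancel hqr.ne', ENNReal.rpow_one,
      ENNReal.mul_div_cancel hcnn ENNReal.coe_ne_top]
  -- bound for the part `S \ F`
  have hSF : eLpNorm ((S \ F).indicator (fun _ => c)) q P ≤ ε / 2 := by
    rw [eLpNorm_indicator_const (hS.diff hFc.measurableSet) hq0 hqt]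
    calc (‖c‖₊ : ℝ≥0∞) * P (S \ F) ^ (1 / q.toReal)
        ≤ (‖c‖₊ : ℝ≥0∞) * δ ^ (1 / q.toReal) :=
          mul_le_mul_right (ENNReal.rpow_le_rpow hFlt.le (by positivity)) _
      _ = ε / 2 := hkey
  rcases F.eq_empty_or_nonempty with rfl | hFne
  · refine ⟨0, 0, LipschitzWith.const' 0, ?_⟩
    have h0 : (S.indicator (fun _ => c) - (0 : A → ℝ))
        = (S \ (∅ : Set A)).indicator (fun _ => c) := by simp
    rw [h0]
    exact le_trans (by simpa using hSF) ENNReal.half_le_self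
  -- Lipschitz functions approximating the indicator of `F`
  set g : ℕ → A → ℝ := fun t x => c * max (1 - (t : ℝ) * infDist x F) 0 with hg
  have hgbd : ∀ t x, |g t x| ≤ |c| := by
    intro t x
    rw [hg, abs_mul]
    have h1 : |max (1 - (t : ℝ) * infDist x F) 0| ≤ 1 := by
      rw [abs_le]
      constructor
      · linarith [le_max_right (1 - (t : ℝ) * infDist x F) 0]
      · apply max_le _ zero_le_one
        have : 0 ≤ (t : ℝ) * infDist x F :=
          mul_nonneg (Nat.cast_nonneg t) infDist_nonneg
        linarith
    calc |c| * |max (1 - (t : ℝ) * infDist x F) 0| ≤ |c| * 1 :=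
        mul_le_mul_of_nonneg_left h1 (abs_nonneg c)
      _ = |c| := mul_one _
  have hglip : ∀ t : ℕ, LipschitzWith (‖c‖₊ * t) (g t) := by
    intro t
    have h1 : LipschitzWith (‖c‖₊ * t) fun r : ℝ => c * max (1 - (t : ℝ) * r) 0 := by
      refine LipschitzWith.of_dist_le_mul fun r1 r2 => ?_
      rw [Real.dist_eq, Real.dist_eq, ← mul_sub, abs_mul]
      have h3 : |max (1 - (t:ℝ) * r1) 0 - max (1 - (t:ℝ) * r2) 0|
          ≤ |(1 - (t:ℝ) * r1) - (1 - (t:ℝ) * r2)| := abs_max_sub_max_le_abs _ _ _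
      have h4 : |(1 - (t:ℝ) * r1) - (1 - (t:ℝ) * r2)| = (t : ℝ) * |r1 - r2| := by
        rw [show (1 - (t:ℝ) * r1) - (1 - (t:ℝ) * r2) = (t:ℝ) * (r2 - r1) by ring,
          abs_mul, abs_sub_comm r2 r1, Nat.abs_cast]
      have h5 : ((‖c‖₊ * t : ℝ≥0) : ℝ) = |c| * t := by
        push_cast [Real.norm_eq_abs]; ring
      rw [h5]
      calc |c| * |max (1 - (t:ℝ) * r1) 0 - max (1 - (t:ℝ) * r2) 0|
          ≤ |c| * ((t:ℝ) * |r1 - r2|) :=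
            mul_le_mul_of_nonneg_left (h3.trans h4.le) (abs_nonneg c)
        _ = |c| * t * |r1 - r2| := by ring
    have h2 := h1.comp (lipschitz_infDist_pt F)
    rw [mul_one] at h2
    exact h2
  -- pointwise eventual equality with the indicator of `F`
  have hptw : ∀ x : A, ∀ᶠ t : ℕ in atTop, g t x = F.indicator (fun _ => c) x := by
    intro x
    by_cases hx : x ∈ F
    · refine Eventually.of_forall fun t => ?_
      rw [hg]
      simp [infDist_zero_of_mem hx, Set.indicator_of_mem hx]
    · have hd : 0 < infDist x F := by
        rw [← hFc.notMem_iff_infDist_pos hFne] at *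
        exact hx
      obtain ⟨T, hT⟩ := exists_nat_ge (1 / infDist x F)
      filter_upwards [eventually_ge_atTop T] with t ht
      have htbig : 1 / infDist x F ≤ (t : ℝ) := hT.trans (by exact_mod_cast ht)
      have h1 : 1 ≤ (t : ℝ) * infDist x F := by
        rw [div_le_iff₀ hd] at htbig
        linarith
      rw [hg, Set.indicator_of_notMem hx]
      simp only [max_eq_right (by linarith : 1 - (t : ℝ) * infDist x F ≤ 0), mul_zero]
  -- dominated convergence
  have hFm : MeasurableSet F := hFc.measurableSet
  have hgm : ∀ t : ℕ, Measurable (g t) := fun t => ((hglip t).continuous).measurable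
  have hdom : Tendsto (fun t : ℕ =>
      ∫⁻ x, (‖F.indicator (fun _ => c) x - g t x‖₊ : ℝ≥0∞) ^ q.toReal ∂P) atTop (𝓝 0) := by
    have h0 : (0 : ℝ≥0∞) = ∫⁻ _x, (0 : ℝ≥0∞) ∂P := by simp
    rw [h0]
    refine tendsto_lintegral_of_dominated_convergence
      (fun _ => ((2 * ‖c‖₊ : ℝ≥0) : ℝ≥0∞) ^ q.toReal)
      (fun t => (((measurable_const.indicator hFm).sub (hgm t))).enorm.pow_const _)
      (fun t => Eventually.of_forall fun x => ?_)
      (by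
        rw [lintegral_const]
        exact ENNReal.mul_ne_top (ENNReal.rpow_ne_top_of_nonneg hqr.le ENNReal.coe_ne_top)
          (measure_ne_top P _)) (Eventually.of_forall fun x => ?_)
    · refine ENNReal.rpow_le_rpow ?_ hqr.le
      rw [ENNReal.coe_le_coe]
      have hind : |F.indicator (fun _ => c) x| ≤ |c| := by
        by_cases hx : x ∈ F <;> simp [hx, abs_nonneg]
      have h1 : ‖F.indicator (fun _ => c) x - g t x‖ ≤ ((2 * ‖c‖₊ : ℝ≥0) : ℝ) := by
        calc ‖F.indicator (fun _ => c) x - g t x‖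
            ≤ ‖F.indicator (fun _ => c) x‖ + ‖g t x‖ := norm_sub_le _ _
          _ ≤ |c| + |c| := add_le_add (by rwa [Real.norm_eq_abs]) (by
              rw [Real.norm_eq_abs]; exact hgbd t x)
          _ = ((2 * ‖c‖₊ : ℝ≥0) : ℝ) := by push_cast [Real.norm_eq_abs]; ring
      exact_mod_cast h1
    · refine Tendsto.congr' ?_ tendsto_const_nhds
      filter_upwards [hptw x] with t ht
      simp [ht, ENNReal.zero_rpow_of_pos hqr]
  obtain ⟨T, hT⟩ := (ENNReal.tendsto_atTop_zero.mp hdom) ((ε / 2) ^ q.toReal)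
    (ENNReal.rpow_pos (by simpa [pos_iff_ne_zero] using hε2) hε2t)
  have hFg : eLpNorm (F.indicator (fun _ => c) - g T) q P ≤ ε / 2 := by
    rw [eLpNorm_eq_lintegral_rpow_enorm_toReal hq0 hqt]
    calc (∫⁻ x, (‖(F.indicator (fun _ => c) - g T) x‖₊ : ℝ≥0∞) ^ q.toReal ∂P) ^ (1 / q.toReal)
        ≤ ((ε / 2) ^ q.toReal) ^ (1 / q.toReal) :=
          ENNReal.rpow_le_rpow (hT T le_rfl) (by positivity)
      _ = ε / 2 := by
          rw [← ENNReal.rpow_mul, mul_one_div_cancel hqr.ne', ENNReal.rpow_one]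
  refine ⟨‖c‖₊ * T, g T, hglip T, ?_⟩
  have hsplit : S.indicator (fun _ => c) - g T
      = ((S \ F).indicator fun _ => c) + (F.indicator (fun _ => c) - g T) := by
    rw [Set.indicator_sdiff hFS]
    abel
  calc eLpNorm (S.indicator (fun _ => c) - g T) q P
      ≤ eLpNorm ((S \ F).indicator fun _ => c) q P
        + eLpNorm (F.indicator (fun _ => c) - g T) q P := by
        rw [hsplit]
        exact eLpNorm_add_le
          (measurable_const.indicator (hS.diff hFm)).aestronglyMeasurable
          ((measurable_const.indicator hFm).sub (hgm T)).aestronglyMeasurable hq1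
    _ ≤ ε / 2 + ε / 2 := add_le_add hSF hFg
    _ = ε := ENNReal.add_halves ε

/-- Lipschitz approximation of a simple function in `L^q`. -/
lemma lip_simpleFunc_approx (P : Measure A) [IsFiniteMeasure P] {q : ℝ≥0∞}
    (hq1 : 1 ≤ q) (hqt : q ≠ ∞) (g : SimpleFunc A ℝ) :
    ∀ ε : ℝ≥0∞, ε ≠ 0 → ∃ (L : ℝ≥0) (ℓ : A → ℝ), LipschitzWith L ℓ ∧
      eLpNorm (⇑g - ℓ) q P ≤ ε := by
  induction g using SimpleFunc.induction with
  | const c hs =>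
    intro ε hε
    obtain ⟨L, ℓ, hL, hle⟩ := lip_indicator_approx P hq1 hqt c hs hε
    refine ⟨L, ℓ, hL, ?_⟩
    simp [SimpleFunc.coe_piecewise, SimpleFunc.coe_const, SimpleFunc.coe_zero,
      Set.piecewise_eq_indicator]
    exact hle
  | @add f g _hdisj hf hg =>
    intro ε hε
    have hε2 : (ε / 2) ≠ 0 := by simp [ENNReal.div_eq_zero_iff, hε]
    obtain ⟨L1, ℓ1, hL1, h1⟩ := hf (ε / 2) hε2
    obtain ⟨L2, ℓ2, hL2, h2⟩ := hg (ε / 2) hε2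
    refine ⟨L1 + L2, ℓ1 + ℓ2, hL1.add hL2, ?_⟩
    have hsplit : ⇑(f + g) - (ℓ1 + ℓ2) = (⇑f - ℓ1) + (⇑g - ℓ2) := by
      rw [SimpleFunc.coe_add]
      abel
    calc eLpNorm (⇑(f + g) - (ℓ1 + ℓ2)) q P
        ≤ eLpNorm (⇑f - ℓ1) q P + eLpNorm (⇑g - ℓ2) q P := by
          rw [hsplit]
          exact eLpNorm_add_le
            (f.measurable.sub (hL1.continuous.measurable)).aestronglyMeasurable
            (g.measurable.sub (hL2.continuous.measurable)).aestronglyMeasurable hq1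
      _ ≤ ε / 2 + ε / 2 := add_le_add h1 h2
      _ = ε := ENNReal.add_halves ε

/-- Lipschitz approximation of an `L^q` function. -/
lemma lip_memLp_approx (P : Measure A) [IsFiniteMeasure P] {q : ℝ≥0∞}
    (hq1 : 1 ≤ q) (hqt : q ≠ ∞) {f : A → ℝ} (hf : MemLp f q P)
    {ε : ℝ≥0∞} (hε : ε ≠ 0) :
    ∃ (L : ℝ≥0) (ℓ : A → ℝ), LipschitzWith L ℓ ∧ eLpNorm (f - ℓ) q P ≤ ε := by
  have hε2 : (ε / 2) ≠ 0 := by simp [ENNReal.div_eq_zero_iff, hε]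
  obtain ⟨g, hg, _⟩ := hf.exists_simpleFunc_eLpNorm_sub_lt hqt hε2
  obtain ⟨L, ℓ, hL, hle⟩ := lip_simpleFunc_approx P hq1 hqt g (ε / 2) hε2
  refine ⟨L, ℓ, hL, ?_⟩
  have hsplit : f - ℓ = (f - ⇑g) + (⇑g - ℓ) := by abel
  calc eLpNorm (f - ℓ) q P
      ≤ eLpNorm (f - ⇑g) q P + eLpNorm (⇑g - ℓ) q P := by
        rw [hsplit]
        exact eLpNorm_add_le (hf.aestronglyMeasurable.sub g.aestronglyMeasurable)
          (g.measurable.sub (hL.continuous.measurable)).aestronglyMeasurable hq1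
    _ ≤ ε / 2 + ε / 2 := add_le_add hg.le hle
    _ = ε := ENNReal.add_halves ε

/-- eLpNorm of the Lipschitz displacement along a plan is bounded by the transport cost. -/
lemma lip_pair_eLpNorm_le {μ : Measure (A × A)} {L : ℝ≥0} {ℓ : A → ℝ}
    (hℓ : LipschitzWith L ℓ) {q : ℝ≥0∞} (hq0 : q ≠ 0) (hqt : q ≠ ∞) :
    eLpNorm (fun z : A × A => ℓ z.1 - ℓ z.2) q μ
      ≤ (L : ℝ≥0∞) * (∫⁻ z, edist z.1 z.2 ^ q.toReal ∂μ) ^ (1 / q.toReal) := by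
  have hqr : 0 < q.toReal := ENNReal.toReal_pos hq0 hqt
  rw [eLpNorm_eq_lintegral_rpow_enorm_toReal hq0 hqt]
  have hptw : ∀ z : A × A, (‖ℓ z.1 - ℓ z.2‖₊ : ℝ≥0∞) ^ q.toReal
      ≤ (L : ℝ≥0∞) ^ q.toReal * edist z.1 z.2 ^ q.toReal := by
    intro z
    rw [← ENNReal.mul_rpow_of_nonneg _ _ hqr.le]
    refine ENNReal.rpow_le_rpow ?_ hqr.le
    rw [← enorm_eq_nnnorm, ← edist_eq_enorm_sub]
    exact hℓ.edist_le_mul z.1 z.2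
  calc (∫⁻ z, (‖ℓ z.1 - ℓ z.2‖₊ : ℝ≥0∞) ^ q.toReal ∂μ) ^ (1 / q.toReal)
      ≤ (∫⁻ z, (L : ℝ≥0∞) ^ q.toReal * edist z.1 z.2 ^ q.toReal ∂μ) ^ (1 / q.toReal) :=
        ENNReal.rpow_le_rpow (lintegral_mono hptw) (by positivity)
    _ = ((L : ℝ≥0∞) ^ q.toReal * ∫⁻ z, edist z.1 z.2 ^ q.toReal ∂μ) ^ (1 / q.toReal) := by
        rw [lintegral_const_mul' _ _ (ENNReal.rpow_ne_top_of_nonneg hqr.le ENNReal.coe_ne_top)]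
    _ = (L : ℝ≥0∞) * (∫⁻ z, edist z.1 z.2 ^ q.toReal ∂μ) ^ (1 / q.toReal) := by
        rw [ENNReal.mul_rpow_of_nonneg _ _ (by positivity), ← ENNReal.rpow_mul,
          mul_one_div_cancel hqr.ne', ENNReal.rpow_one]

end TLpAux

/-- If `(f_n, P_n) → (f, P)` in `TL^p`, then along *any* sequence of
transport plans whose transport cost vanishes, the function discrepancy also vanishes. -/
theorem dTL_tendsto_all_plans
    {A : Type*} [MeasurableSpace A] [MetricSpace A] [BorelSpace A]
    (p : ℝ) (hp : 1 ≤ p)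
    (f : A → ℝ) (P : Measure A) (fn : ℕ → A → ℝ) (Pn : ℕ → Measure A)
    (hfP : MemTL p f P) (hfn : ∀ n, MemTL p (fn n) (Pn n))
    (hconv : Tendsto (fun n => dTL p (fun x y => dist x y) (fn n) (Pn n) f P) atTop (𝓝 0))
    (π : ℕ → Measure (A × A)) (hπ : ∀ n, π n ∈ Coupling P (Pn n))
    (hd : Tendsto (fun n => ∫⁻ z, ENNReal.ofReal (dist z.1 z.2 ^ p) ∂π n) atTop (𝓝 0)) :
    Tendsto (fun n => ∫⁻ z, ENNReal.ofReal (|f z.1 - fn n z.2| ^ p) ∂π n)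
      atTop (𝓝 0) := by
  obtain ⟨hPprob, hfm, hfLp⟩ := hfP
  haveI := hPprob
  have hp0 : (0 : ℝ) < p := lt_of_lt_of_le zero_lt_one hp
  set q : ℝ≥0∞ := ENNReal.ofReal p with hqdef
  have hq1 : 1 ≤ q := by
    rw [hqdef, ← ENNReal.ofReal_one]; exact ENNReal.ofReal_le_ofReal hp
  have hq0 : q ≠ 0 := (zero_lt_one.trans_le hq1).ne'
  have hqt : q ≠ ∞ := ENNReal.ofReal_ne_top
  have hqr : q.toReal = p := ENNReal.toReal_ofReal hp0.le
  have habs : ∀ a : ℝ, ENNReal.ofReal (|a| ^ p) = (‖a‖₊ : ℝ≥0∞) ^ p := fun a => by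
    rw [← ENNReal.ofReal_rpow_of_nonneg (abs_nonneg a) hp0.le, ← enorm_eq_nnnorm, Real.enorm_eq_ofReal_abs]
  have hdistp : ∀ x y : A, ENNReal.ofReal (dist x y ^ p) = edist x y ^ p := fun x y => by
    rw [← ENNReal.ofReal_rpow_of_nonneg dist_nonneg hp0.le, edist_dist]
  simp only [habs]
  simp only [hdistp] at hd
  rw [ENNReal.tendsto_atTop_zero]
  intro ε hε
  rcases eq_or_ne ε ∞ with rfl | hεt
  · exact ⟨0, fun n _ => le_top⟩
  set ε' : ℝ≥0∞ := ε ^ (1 / p) with hε'def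
  have hε'0 : ε' ≠ 0 := (ENNReal.rpow_pos hε hεt).ne'
  have hε't : ε' ≠ ∞ := ENNReal.rpow_ne_top_of_nonneg (by positivity) hεt
  set u : ℝ≥0∞ := ε' / 8 with hudef
  have hu0 : u ≠ 0 := by simp [hudef, ENNReal.div_eq_zero_iff, hε'0]
  have hut : u ≠ ∞ := by simp [hudef, ENNReal.div_eq_top, hε't]
  -- Lipschitz approximation of f
  obtain ⟨L, ℓ, hL, hfℓ⟩ := lip_memLp_approx P hq1 hqt hfLp hu0
  have hℓm : Measurable ℓ := hL.continuous.measurable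
  set M : ℝ≥0∞ := (L : ℝ≥0∞) + 1 with hMdef
  have hM0 : M ≠ 0 := by simp [hMdef]
  have hMt : M ≠ ∞ := by simp [hMdef, ENNReal.coe_ne_top]
  have hLM : (L : ℝ≥0∞) ≤ M := by rw [hMdef]; exact le_self_add
  have h1M : 1 ≤ M := by rw [hMdef]; exact le_add_self
  set η : ℝ≥0∞ := u / M with hηdef
  have hη0 : η ≠ 0 := by
    simp [hηdef, ENNReal.div_eq_zero_iff, hu0, hMt]
  have hηt : η ≠ ∞ := (ENNReal.div_lt_top hut hM0).ne
  have hMη : M * η = u := ENNReal.mul_div_cancel hM0 hMt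
  set δ : ℝ≥0∞ := η ^ p with hδdef
  have hδ0 : 0 < δ := by
    rw [hδdef]
    exact ENNReal.rpow_pos (pos_iff_ne_zero.mpr hη0) hηt
  have hδcol : δ ^ (1 / p) = η := by
    rw [hδdef, ← ENNReal.rpow_mul, mul_one_div_cancel hp0.ne', ENNReal.rpow_one]
  obtain ⟨N1, hN1⟩ := (ENNReal.tendsto_atTop_zero.mp hconv) η (pos_iff_ne_zero.mpr hη0)
  obtain ⟨N2, hN2⟩ := (ENNReal.tendsto_atTop_zero.mp hd) δ hδ0
  refine ⟨max N1 N2, fun n hn => ?_⟩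
  have hdTL : dTL p (fun x y => dist x y) (fn n) (Pn n) f P ≤ η :=
    hN1 n (le_trans (le_max_left _ _) hn)
  have hDn : (∫⁻ z, edist z.1 z.2 ^ p ∂π n) ≤ δ := hN2 n (le_trans (le_max_right _ _) hn)
  obtain ⟨hπprob, hπfst, hπsnd⟩ := hπ n
  haveI := hπprob
  haveI := (hfn n).1
  have hfnm : Measurable (fn n) := (hfn n).2.1
  -- choose a near-optimal coupling for the TL distance
  have hlt : dTL p (fun x y => dist x y) (fn n) (Pn n) f P
      < dTL p (fun x y => dist x y) (fn n) (Pn n) f P + η :=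
    ENNReal.lt_add_right (ne_top_of_le_ne_top hηt hdTL) hη0
  unfold dTL at hlt
  obtain ⟨σ, hσ1⟩ := iInf_lt_iff.mp hlt
  obtain ⟨hσmem, hσlt⟩ := iInf_lt_iff.mp hσ1
  obtain ⟨hσprob, hσfst, hσsnd⟩ := hσmem
  haveI := hσprob
  set C : ℝ≥0∞ :=
    ∫⁻ z, ENNReal.ofReal (dist z.1 z.2 ^ p + |fn n z.1 - f z.2| ^ p) ∂σ with hCdef
  have hC2 : C ^ (1 / p) ≤ η + η :=
    le_trans hσlt.le (add_le_add_left hdTL _)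
  have hCd : (∫⁻ z, edist z.1 z.2 ^ p ∂σ) ≤ C := by
    refine lintegral_mono fun z => ?_
    rw [← hdistp]
    exact ENNReal.ofReal_le_ofReal
      (le_add_of_nonneg_right (Real.rpow_nonneg (abs_nonneg _) p))
  have hCf : (∫⁻ z, (‖fn n z.1 - f z.2‖₊ : ℝ≥0∞) ^ p ∂σ) ≤ C := by
    refine lintegral_mono fun z => ?_
    rw [← habs]
    exact ENNReal.ofReal_le_ofReal
      (le_add_of_nonneg_left (Real.rpow_nonneg dist_nonneg p))
  -- term 1
  have hT1 : eLpNorm (fun z : A × A => f z.1 - ℓ z.1) q (π n) ≤ u := by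
    have h2 : eLpNorm (fun z : A × A => f z.1 - ℓ z.1) q (π n) = eLpNorm (f - ℓ) q P := by
      rw [← hπfst]
      exact (eLpNorm_map_measure ((hfm.sub hℓm).aestronglyMeasurable)
        measurable_fst.aemeasurable).symm
    rw [h2]; exact hfℓ
  -- term 2
  have hT2 : eLpNorm (fun z : A × A => ℓ z.1 - ℓ z.2) q (π n) ≤ u := by
    have h2 := lip_pair_eLpNorm_le (μ := π n) hL hq0 hqt
    rw [hqr] at h2
    refine h2.trans ?_
    calc (L : ℝ≥0∞) * (∫⁻ z, edist z.1 z.2 ^ p ∂π n) ^ (1 / p)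
        ≤ M * δ ^ (1 / p) := by
          exact mul_le_mul' hLM (ENNReal.rpow_le_rpow hDn (by positivity))
      _ = u := by rw [hδcol, hMη]
  -- term 3
  have hT3a : eLpNorm (fun z : A × A => ℓ z.1 - ℓ z.2) q σ ≤ M * (η + η) := by
    have h2 := lip_pair_eLpNorm_le (μ := σ) hL hq0 hqt
    rw [hqr] at h2
    refine h2.trans ?_
    refine mul_le_mul' hLM ?_
    exact le_trans (ENNReal.rpow_le_rpow hCd (by positivity)) hC2
  have hT3b : eLpNorm (fun z : A × A => ℓ z.2 - f z.2) q σ ≤ u := by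
    have h2 : eLpNorm (fun z : A × A => ℓ z.2 - f z.2) q σ = eLpNorm (ℓ - f) q P := by
      rw [← hσsnd]
      exact (eLpNorm_map_measure ((hℓm.sub hfm).aestronglyMeasurable)
        measurable_snd.aemeasurable).symm
    rw [h2, eLpNorm_sub_comm]; exact hfℓ
  have hT3c : eLpNorm (fun z : A × A => f z.2 - fn n z.1) q σ ≤ η + η := by
    rw [eLpNorm_eq_lintegral_rpow_enorm_toReal hq0 hqt, hqr]
    have h2 : ∀ z : A × A, (‖f z.2 - fn n z.1‖₊ : ℝ≥0∞) = ‖fn n z.1 - f z.2‖₊ := fun z => by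
      rw [← nnnorm_neg, neg_sub]
    refine le_trans ?_ hC2
    refine ENNReal.rpow_le_rpow ?_ (by positivity)
    refine le_trans (le_of_eq ?_) hCf
    exact lintegral_congr fun z => by rw [enorm_eq_nnnorm, h2]
  have hT3 : eLpNorm (fun z : A × A => ℓ z.2 - fn n z.2) q (π n)
      ≤ M * (η + η) + (u + (η + η)) := by
    have h2 : eLpNorm (fun z : A × A => ℓ z.2 - fn n z.2) q (π n)
        = eLpNorm (ℓ - fn n) q (Pn n) := by
      rw [← hπsnd]
      exact (eLpNorm_map_measure ((hℓm.sub hfnm).aestronglyMeasurable)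
        measurable_snd.aemeasurable).symm
    have h3 : eLpNorm (ℓ - fn n) q (Pn n)
        = eLpNorm (fun z : A × A => ℓ z.1 - fn n z.1) q σ := by
      rw [← hσfst]
      exact eLpNorm_map_measure ((hℓm.sub hfnm).aestronglyMeasurable)
        measurable_fst.aemeasurable
    rw [h2, h3]
    have hsplit : (fun z : A × A => ℓ z.1 - fn n z.1)
        = (fun z : A × A => ℓ z.1 - ℓ z.2)
          + ((fun z : A × A => ℓ z.2 - f z.2) + fun z : A × A => f z.2 - fn n z.1) := by
      funext z
      simp only [Pi.add_apply]
      ring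
    have hm1 : AEStronglyMeasurable (fun z : A × A => ℓ z.1 - ℓ z.2) σ :=
      ((hℓm.comp measurable_fst).sub (hℓm.comp measurable_snd)).aestronglyMeasurable
    have hm2 : AEStronglyMeasurable (fun z : A × A => ℓ z.2 - f z.2) σ :=
      ((hℓm.comp measurable_snd).sub (hfm.comp measurable_snd)).aestronglyMeasurable
    have hm3 : AEStronglyMeasurable (fun z : A × A => f z.2 - fn n z.1) σ :=
      ((hfm.comp measurable_snd).sub (hfnm.comp measurable_fst)).aestronglyMeasurable
    calc eLpNorm (fun z : A × A => ℓ z.1 - fn n z.1) q σ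
        ≤ eLpNorm (fun z : A × A => ℓ z.1 - ℓ z.2) q σ
          + eLpNorm ((fun z : A × A => ℓ z.2 - f z.2)
            + fun z : A × A => f z.2 - fn n z.1) q σ := by
          rw [hsplit]
          exact eLpNorm_add_le hm1 (hm2.add hm3) hq1
      _ ≤ eLpNorm (fun z : A × A => ℓ z.1 - ℓ z.2) q σ
          + (eLpNorm (fun z : A × A => ℓ z.2 - f z.2) q σ
            + eLpNorm (fun z : A × A => f z.2 - fn n z.1) q σ) :=
          add_le_add_right (eLpNorm_add_le hm2 hm3 hq1) _
      _ ≤ M * (η + η) + (u + (η + η)) :=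
          add_le_add hT3a (add_le_add hT3b hT3c)
  -- assemble
  have hm1 : AEStronglyMeasurable (fun z : A × A => f z.1 - ℓ z.1) (π n) :=
    ((hfm.comp measurable_fst).sub (hℓm.comp measurable_fst)).aestronglyMeasurable
  have hm2 : AEStronglyMeasurable (fun z : A × A => ℓ z.1 - ℓ z.2) (π n) :=
    ((hℓm.comp measurable_fst).sub (hℓm.comp measurable_snd)).aestronglyMeasurable
  have hm3 : AEStronglyMeasurable (fun z : A × A => ℓ z.2 - fn n z.2) (π n) :=
    ((hℓm.comp measurable_snd).sub (hfnm.comp measurable_snd)).aestronglyMeasurable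
  have hsplit : (fun z : A × A => f z.1 - fn n z.2)
      = (fun z : A × A => f z.1 - ℓ z.1)
        + ((fun z : A × A => ℓ z.1 - ℓ z.2) + fun z : A × A => ℓ z.2 - fn n z.2) := by
    funext z
    simp only [Pi.add_apply]
    ring
  have hE : eLpNorm (fun z : A × A => f z.1 - fn n z.2) q (π n) ≤ ε' := by
    have hMηη : M * (η + η) = u + u := by rw [mul_add, hMη]
    have hηηu : η + η ≤ u + u := by
      have : η ≤ u := by
        rw [← hMη]
        exact le_mul_of_one_le_left' h1M
      exact add_le_add this this
    calc eLpNorm (fun z : A × A => f z.1 - fn n z.2) q (π n)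
        ≤ eLpNorm (fun z : A × A => f z.1 - ℓ z.1) q (π n)
          + eLpNorm ((fun z : A × A => ℓ z.1 - ℓ z.2)
            + fun z : A × A => ℓ z.2 - fn n z.2) q (π n) := by
          rw [hsplit]
          exact eLpNorm_add_le hm1 (hm2.add hm3) hq1
      _ ≤ eLpNorm (fun z : A × A => f z.1 - ℓ z.1) q (π n)
          + (eLpNorm (fun z : A × A => ℓ z.1 - ℓ z.2) q (π n)
            + eLpNorm (fun z : A × A => ℓ z.2 - fn n z.2) q (π n)) :=
          add_le_add_right (eLpNorm_add_le hm2 hm3 hq1) _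
      _ ≤ u + (u + (M * (η + η) + (u + (η + η)))) :=
          add_le_add hT1 (add_le_add hT2 hT3)
      _ ≤ u + (u + ((u + u) + (u + (u + u)))) := by
          rw [hMηη]
          exact add_le_add_right (add_le_add_right (add_le_add_right
            (add_le_add_right hηηu _) _) _) _
      _ = 7 * u := by ring
      _ ≤ 8 * u := mul_le_mul_left (by norm_num) u
      _ = ε' := by
          rw [hudef]
          exact ENNReal.mul_div_cancel (by norm_num) (by norm_num)
  -- conclude
  have hgoal : eLpNorm (fun z : A × A => f z.1 - fn n z.2) q (π n)
      = (∫⁻ z, (‖f z.1 - fn n z.2‖₊ : ℝ≥0∞) ^ p ∂π n) ^ (1 / p) := by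
    rw [eLpNorm_eq_lintegral_rpow_enorm_toReal hq0 hqt, hqr]
    simp only [enorm_eq_nnnorm]
  rw [hgoal, hε'def] at hE
  exact (ENNReal.rpow_le_rpow_iff (by positivity)).mp hE
end
end

section
/- Let S ⊂ ℝ^d be open and bounded, let ρ_S: S → (0,∞) satisfy 0 < c₀ ≤ ρ_S(θ) ≤ C₀ < ∞ on S, and let η: [0,∞) → [0,∞) be non-increasing, continuous, compactly supported, with η(0) > 0. Let Ω ⊂ ℝ^k be open and bounded, and for each θ ∈ S let E(θ) be a Borel probability measure on Ω and B_θ(h) ∈ C¹(ℝ^k;ℝ^k) a vector field, defined for h ∈ ℝ^d, such that C^{−1}‖h‖ ≤ ‖B_θ(h)‖_{L²(E(θ))} ≤ C‖h‖ for all θ ∈ S and h ∈ ℝ^d, where ‖V‖_{L²(E(θ))} = (∫_Ω |V(x)|² dE(θ)(x))^{1/2} and C ≥ 1 is independent of θ. Then for every p ≥ 1 there exist constants 0 < c₁ ≤ c₂ < ∞, depending only on c₀, C₀, C, η, p and d, such that for every measurable V: S → ℝ^d: c₁·∫_S |V(θ)|^p dθ ≤ ∫_{ℝ^d} ∫_S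 |V(θ)·h|^p η(‖B_θ(h)‖_{L²(E(θ))}) ρ_S²(θ) dθ dh ≤ c₂·∫_S |V(θ)|^p dθ. In particular, the double integral is finite if and only if V ∈ L^p(S;ℝ^d). -/
open MeasureTheory ProbabilityTheory Filter Set Metric
open scoped ENNReal NNReal Topology

noncomputable section

section AuxEnergy

variable {d : ℕ}

lemma aux_inner_rot (p r : ℝ) {u v : EuclideanSpace ℝ (Fin d)} (huv : ‖u‖ = ‖v‖) :
    ∫⁻ h in Metric.ball (0 : EuclideanSpace ℝ (Fin d)) r,
        ENNReal.ofReal (|(inner ℝ u h : ℝ)| ^ p) ∂volume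
      = ∫⁻ h in Metric.ball (0 : EuclideanSpace ℝ (Fin d)) r,
        ENNReal.ofReal (|(inner ℝ v h : ℝ)| ^ p) ∂volume := by
  rcases eq_or_ne u v with rfl | hne
  · rfl
  have hR : Submodule.reflection (ℝ ∙ (u - v))ᗮ u = v := Submodule.reflection_sub huv
  set R := Submodule.reflection (ℝ ∙ (u - v))ᗮ with hRdef
  have hmp : MeasurePreserving R volume volume := R.measurePreserving
  have hemb : MeasurableEmbedding R := R.toHomeomorph.measurableEmbedding
  have hpre : R ⁻¹' Metric.ball (0 : EuclideanSpace ℝ (Fin d)) r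
      = Metric.ball (0 : EuclideanSpace ℝ (Fin d)) r := by
    ext x
    simp [Metric.mem_ball, dist_zero_right, R.norm_map]
  calc ∫⁻ h in Metric.ball (0 : EuclideanSpace ℝ (Fin d)) r,
        ENNReal.ofReal (|(inner ℝ u h : ℝ)| ^ p) ∂volume
      = ∫⁻ h in R ⁻¹' Metric.ball (0 : EuclideanSpace ℝ (Fin d)) r,
          ENNReal.ofReal (|(inner ℝ v (R h) : ℝ)| ^ p) ∂volume := by
        rw [hpre]
        refine lintegral_congr fun h => ?_
        rw [← hR, R.inner_map_map]
    _ = _ := hmp.setLIntegral_comp_preimage_emb hemb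
      (fun b => ENNReal.ofReal (|(inner ℝ v b : ℝ)| ^ p)) (Metric.ball 0 r)

lemma aux_inner_scale (p r : ℝ) (hp : 1 ≤ p) {e : EuclideanSpace ℝ (Fin d)} (he : ‖e‖ = 1)
    (v : EuclideanSpace ℝ (Fin d)) :
    ∫⁻ h in Metric.ball (0 : EuclideanSpace ℝ (Fin d)) r,
        ENNReal.ofReal (|(inner ℝ v h : ℝ)| ^ p) ∂volume
      = ENNReal.ofReal (‖v‖ ^ p) *
        ∫⁻ h in Metric.ball (0 : EuclideanSpace ℝ (Fin d)) r,
          ENNReal.ofReal (|(inner ℝ e h : ℝ)| ^ p) ∂volume := by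
  have hp0 : p ≠ 0 := by intro h; rw [h] at hp; linarith
  rcases eq_or_ne v 0 with rfl | hv
  · simp [Real.zero_rpow hp0]
  · have hnv : 0 < ‖v‖ := norm_pos_iff.2 hv
    set u : EuclideanSpace ℝ (Fin d) := ‖v‖⁻¹ • v with hu
    have hun : ‖u‖ = 1 := by
      rw [hu, norm_smul, norm_inv, norm_norm, inv_mul_cancel₀ hnv.ne']
    have hvu : v = ‖v‖ • u := by
      rw [hu, smul_smul, mul_inv_cancel₀ hnv.ne', one_smul]
    have hinner : ∀ h : EuclideanSpace ℝ (Fin d),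
        (inner ℝ v h : ℝ) = ‖v‖ * (inner ℝ u h : ℝ) := by
      intro h
      conv_lhs => rw [hvu]
      exact real_inner_smul_left u h ‖v‖
    calc ∫⁻ h in Metric.ball (0 : EuclideanSpace ℝ (Fin d)) r,
          ENNReal.ofReal (|(inner ℝ v h : ℝ)| ^ p) ∂volume
        = ∫⁻ h in Metric.ball (0 : EuclideanSpace ℝ (Fin d)) r,
            ENNReal.ofReal (‖v‖ ^ p) * ENNReal.ofReal (|(inner ℝ u h : ℝ)| ^ p) ∂volume := by
          refine lintegral_congr fun h => ?_
          rw [hinner, abs_mul, abs_of_nonneg (norm_nonneg v),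
            Real.mul_rpow (norm_nonneg v) (abs_nonneg _),
            ENNReal.ofReal_mul (by positivity)]
      _ = ENNReal.ofReal (‖v‖ ^ p) *
            ∫⁻ h in Metric.ball (0 : EuclideanSpace ℝ (Fin d)) r,
              ENNReal.ofReal (|(inner ℝ u h : ℝ)| ^ p) ∂volume :=
          lintegral_const_mul' _ _ ENNReal.ofReal_ne_top
      _ = _ := by rw [aux_inner_rot p r (hun.trans he.symm)]

lemma aux_kappa_pos (p r : ℝ) (hp : 1 ≤ p) (hr : 0 < r) {e : EuclideanSpace ℝ (Fin d)}
    (he : ‖e‖ = 1) :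
    0 < ∫⁻ h in Metric.ball (0 : EuclideanSpace ℝ (Fin d)) r,
        ENNReal.ofReal (|(inner ℝ e h : ℝ)| ^ p) ∂volume := by
  by_contra hcon
  push_neg at hcon
  have h0 : ∫⁻ h in Metric.ball (0 : EuclideanSpace ℝ (Fin d)) r,
      ENNReal.ofReal (|(inner ℝ e h : ℝ)| ^ p) ∂volume = 0 :=
    le_antisymm (by simpa using hcon) zero_le
  have hmeas : Measurable fun h : EuclideanSpace ℝ (Fin d) =>
      ENNReal.ofReal (|(inner ℝ e h : ℝ)| ^ p) :=
    (((measurable_const.inner measurable_id).abs.pow measurable_const)).ennreal_ofReal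
  rw [lintegral_eq_zero_iff hmeas] at h0
  have hN : volume {h : EuclideanSpace ℝ (Fin d) | (inner ℝ e h : ℝ) = 0} = 0 := by
    have hset : {h : EuclideanSpace ℝ (Fin d) | (inner ℝ e h : ℝ) = 0}
        = ((ℝ ∙ e)ᗮ : Submodule ℝ (EuclideanSpace ℝ (Fin d))) := by
      ext h
      exact (Submodule.mem_orthogonal_singleton_iff_inner_right).symm
    rw [hset]
    refine Measure.addHaar_submodule _ _ ?_
    intro htop
    have he' : e ∈ (ℝ ∙ e)ᗮ := htop ▸ Submodule.mem_top
    have h0' : (inner ℝ e e : ℝ) = 0 :=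
      Submodule.mem_orthogonal_singleton_iff_inner_right.mp he'
    rw [real_inner_self_eq_norm_sq, he] at h0'
    norm_num at h0'
  have hzero : volume.restrict (Metric.ball (0 : EuclideanSpace ℝ (Fin d)) r)
      {h | ENNReal.ofReal (|(inner ℝ e h : ℝ)| ^ p) ≠ 0} = 0 := by
    have := ae_iff.mp h0
    simpa using this
  have hsub : Metric.ball (0 : EuclideanSpace ℝ (Fin d)) r \
        {h : EuclideanSpace ℝ (Fin d) | (inner ℝ e h : ℝ) = 0}
      ⊆ {h | ENNReal.ofReal (|(inner ℝ e h : ℝ)| ^ p) ≠ 0} := by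
    rintro h ⟨-, hh⟩
    simp only [mem_setOf_eq] at hh ⊢
    have habs : 0 < |(inner ℝ e h : ℝ)| := abs_pos.2 hh
    have hpos : 0 < |(inner ℝ e h : ℝ)| ^ p := Real.rpow_pos_of_pos habs p
    exact (ENNReal.ofReal_pos.2 hpos).ne'
  have hfin : volume.restrict (Metric.ball (0 : EuclideanSpace ℝ (Fin d)) r)
      (Metric.ball (0 : EuclideanSpace ℝ (Fin d)) r \
        {h : EuclideanSpace ℝ (Fin d) | (inner ℝ e h : ℝ) = 0}) = 0 :=
    measure_mono_null hsub hzero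
  rw [Measure.restrict_apply' measurableSet_ball,
    inter_eq_self_of_subset_left diff_subset] at hfin
  rw [measure_diff_null hN] at hfin
  exact (measure_ball_pos volume 0 hr).ne' hfin

lemma aux_kappa_ne_top (p r : ℝ) (hp : 1 ≤ p) {e : EuclideanSpace ℝ (Fin d)} (he : ‖e‖ = 1)
    (hr : 0 < r) :
    ∫⁻ h in Metric.ball (0 : EuclideanSpace ℝ (Fin d)) r,
        ENNReal.ofReal (|(inner ℝ e h : ℝ)| ^ p) ∂volume ≠ ⊤ := by
  have hb : ∀ h ∈ Metric.ball (0 : EuclideanSpace ℝ (Fin d)) r,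
      ENNReal.ofReal (|(inner ℝ e h : ℝ)| ^ p) ≤ ENNReal.ofReal (r ^ p) := by
    intro h hh
    apply ENNReal.ofReal_le_ofReal
    refine Real.rpow_le_rpow (abs_nonneg _) ?_ (by linarith)
    calc |(inner ℝ e h : ℝ)| ≤ ‖e‖ * ‖h‖ := abs_real_inner_le_norm e h
      _ = ‖h‖ := by rw [he, one_mul]
      _ ≤ r := (mem_ball_zero_iff.1 hh).le
  have hle : ∫⁻ h in Metric.ball (0 : EuclideanSpace ℝ (Fin d)) r,
      ENNReal.ofReal (|(inner ℝ e h : ℝ)| ^ p) ∂volume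
      ≤ ∫⁻ _ in Metric.ball (0 : EuclideanSpace ℝ (Fin d)) r,
        ENNReal.ofReal (r ^ p) ∂volume := by
    refine lintegral_mono_ae ?_
    rw [ae_restrict_iff' measurableSet_ball]
    exact Filter.Eventually.of_forall hb
  refine ne_top_of_le_ne_top ?_ hle
  rw [setLIntegral_const]
  exact ENNReal.mul_ne_top ENNReal.ofReal_ne_top measure_ball_lt_top.ne

end AuxEnergy

/-- Two-sided comparison of the continuum nonlocal energy density with the
`L^p` norm: there are constants `0 < c₁ ≤ c₂ < ∞`, depending only on `c₀, C₀, C, η, p, d`,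
such that for every measurable vector field `V`,
`c₁ ∫_S |V|^p ≤ ∫_{ℝ^d} ∫_S |V(θ)·h|^p η(‖B_θ(h)‖_{L²(E(θ))}) ρ_S²(θ) dθ dh ≤ c₂ ∫_S |V|^p`;
in particular the double integral is finite iff `V ∈ L^p(S; ℝ^d)`. -/
theorem energy_comparable_lp
    (d : ℕ) (p c₀ C₀ CB : ℝ) (hp : 1 ≤ p)
    (hc₀ : 0 < c₀) (hc₀C₀ : c₀ ≤ C₀) (hCB : 1 ≤ CB)
    (η : ℝ → ℝ) (hηnn : ∀ t, 0 ≤ η t) (hηanti : AntitoneOn η (Set.Ici 0))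
    (hηcont : ContinuousOn η (Set.Ici 0)) (hη0 : 0 < η 0)
    (Rη : ℝ) (hRη : 0 < Rη) (hηsupp : ∀ t, Rη < t → η t = 0) :
    ∃ c₁ c₂ : ℝ, 0 < c₁ ∧ c₁ ≤ c₂ ∧
      ∀ {k : ℕ} (Ω : Set (EuclideanSpace ℝ (Fin k))),
        IsOpen Ω → Bornology.IsBounded Ω →
        ∀ (S : Set (EuclideanSpace ℝ (Fin d))),
          IsOpen S → Bornology.IsBounded S →
          ∀ (ρS : EuclideanSpace ℝ (Fin d) → ℝ),
            (∀ θ ∈ S, c₀ ≤ ρS θ ∧ ρS θ ≤ C₀) →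
            ∀ (Emap : EuclideanSpace ℝ (Fin d) → Measure (EuclideanSpace ℝ (Fin k))),
              (∀ θ ∈ S, IsProbabilityMeasure (Emap θ) ∧ Emap θ Ωᶜ = 0) →
              ∀ (B : EuclideanSpace ℝ (Fin d) → EuclideanSpace ℝ (Fin d) →
                  EuclideanSpace ℝ (Fin k) → EuclideanSpace ℝ (Fin k)),
                (∀ θ ∈ S, ∀ h, ContDiff ℝ 1 (B θ h)) →
                (∀ θ ∈ S, ∀ h,
                  CB⁻¹ * ‖h‖ ≤ Real.sqrt (∫ x, ‖B θ h x‖ ^ 2 ∂Emap θ) ∧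
                  Real.sqrt (∫ x, ‖B θ h x‖ ^ 2 ∂Emap θ) ≤ CB * ‖h‖) →
                ∀ V : EuclideanSpace ℝ (Fin d) → EuclideanSpace ℝ (Fin d),
                  Measurable V →
                  (ENNReal.ofReal c₁ *
                      ∫⁻ θ in S, ENNReal.ofReal (‖V θ‖ ^ p) ∂volume ≤
                    ∫⁻ h, ∫⁻ θ in S,
                      ENNReal.ofReal (|(inner ℝ (V θ) h : ℝ)| ^ p *
                        η (Real.sqrt (∫ x, ‖B θ h x‖ ^ 2 ∂Emap θ)) * ρS θ ^ 2)
                      ∂volume ∂volume) ∧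
                  (∫⁻ h, ∫⁻ θ in S,
                      ENNReal.ofReal (|(inner ℝ (V θ) h : ℝ)| ^ p *
                        η (Real.sqrt (∫ x, ‖B θ h x‖ ^ 2 ∂Emap θ)) * ρS θ ^ 2)
                      ∂volume ∂volume ≤
                    ENNReal.ofReal c₂ *
                      ∫⁻ θ in S, ENNReal.ofReal (‖V θ‖ ^ p) ∂volume) ∧
                  ((∫⁻ h, ∫⁻ θ in S,
                      ENNReal.ofReal (|(inner ℝ (V θ) h : ℝ)| ^ p *
                        η (Real.sqrt (∫ x, ‖B θ h x‖ ^ 2 ∂Emap θ)) * ρS θ ^ 2)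
                      ∂volume ∂volume ≠ ⊤) ↔
                    (∫⁻ θ in S, ENNReal.ofReal (‖V θ‖ ^ p) ∂volume ≠ ⊤)) := by
  have hp0 : (0:ℝ) < p := lt_of_lt_of_le one_pos hp
  have hCB0 : (0:ℝ) < CB := lt_of_lt_of_le one_pos hCB
  have hC₀pos : 0 < C₀ := lt_of_lt_of_le hc₀ hc₀C₀
  obtain ⟨ε, hε, hballη⟩ : ∃ ε > 0, Metric.ball (0:ℝ) ε ∩ Set.Ici 0 ⊆ η ⁻¹' Set.Ioi (η 0 / 2) := by
    have hc : ContinuousWithinAt η (Set.Ici 0) 0 := hηcont 0 Set.self_mem_Ici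
    have hmem : η ⁻¹' Set.Ioi (η 0 / 2) ∈ 𝓝[Set.Ici (0:ℝ)] 0 :=
      hc (Ioi_mem_nhds (by linarith))
    exact Metric.mem_nhdsWithin_iff.1 hmem
  set r₀ : ℝ := ε / 2 with hr₀def
  have hr₀pos : 0 < r₀ := by positivity
  have hr₀ : ∀ t, 0 ≤ t → t ≤ r₀ → η 0 / 2 ≤ η t := by
    intro t ht htr
    have hmem : t ∈ Metric.ball (0:ℝ) ε ∩ Set.Ici 0 := by
      refine ⟨?_, ht⟩
      rw [Metric.mem_ball, Real.dist_eq, sub_zero, abs_of_nonneg ht]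
      rw [hr₀def] at htr; linarith
    exact (hballη hmem).le
  rcases Nat.eq_zero_or_pos d with hd0 | hd
  · -- degenerate case `d = 0`: everything is zero
    subst hd0
    refine ⟨1, 1, one_pos, le_refl 1, ?_⟩
    intro k Ω hΩo hΩb S hSo hSb ρS hρ Emap hE B hB hBb V hV
    have hV0 : ∀ θ, V θ = (0 : EuclideanSpace ℝ (Fin 0)) :=
      fun θ => by ext i; exact i.elim0
    have hinner : ∀ θ (h : EuclideanSpace ℝ (Fin 0)), (inner ℝ (V θ) h : ℝ) = 0 := by
      intro θ h; rw [hV0 θ]; exact inner_zero_left _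
    have hzR : ∀ θ : EuclideanSpace ℝ (Fin 0), ‖V θ‖ ^ p = 0 := by
      intro θ; rw [hV0 θ, norm_zero, Real.zero_rpow (ne_of_gt hp0)]
    simp only [hinner, hzR, abs_zero, Real.zero_rpow (ne_of_gt hp0), zero_mul,
      ENNReal.ofReal_zero, lintegral_zero, mul_zero, le_refl]
    simp
  -- main case `1 ≤ d`
  set e : EuclideanSpace ℝ (Fin d) := EuclideanSpace.single (⟨0, hd⟩ : Fin d) (1:ℝ) with he_def
  have he : ‖e‖ = 1 := by rw [he_def, EuclideanSpace.norm_single]; norm_num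
  set r : ℝ := r₀ / CB with hrdef
  have hrpos : 0 < r := by positivity
  set κ : ℝ≥0∞ := ∫⁻ h in Metric.ball (0 : EuclideanSpace ℝ (Fin d)) r,
      ENNReal.ofReal (|(inner ℝ e h : ℝ)| ^ p) ∂volume with hκdef
  have hκpos : 0 < κ := aux_kappa_pos p r hp hrpos he
  have hκtop : κ ≠ ⊤ := aux_kappa_ne_top p r hp he hrpos
  set c : ℝ := η 0 / 2 * c₀ ^ 2 with hcdef
  have hcpos : 0 < c := by rw [hcdef]; positivity
  set c₂ : ℝ := (CB * Rη) ^ p * η 0 * C₀ ^ 2 *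
      (volume (Metric.closedBall (0 : EuclideanSpace ℝ (Fin d)) (CB * Rη))).toReal with hc₂def
  have hvolpos : 0 <
      (volume (Metric.closedBall (0 : EuclideanSpace ℝ (Fin d)) (CB * Rη))).toReal :=
    ENNReal.toReal_pos (measure_closedBall_pos volume 0 (by positivity)).ne'
      measure_closedBall_lt_top.ne
  have hc₂pos : 0 < c₂ := by
    have h1 : 0 < (CB * Rη) ^ p := Real.rpow_pos_of_pos (by positivity) p
    exact mul_pos (mul_pos (mul_pos h1 hη0) (by positivity)) hvolpos
  have hc₁pos : 0 < min (c * κ.toReal) c₂ :=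
    lt_min (mul_pos hcpos (ENNReal.toReal_pos hκpos.ne' hκtop)) hc₂pos
  refine ⟨min (c * κ.toReal) c₂, c₂, hc₁pos, min_le_right _ _, ?_⟩
  intro k Ω hΩo hΩb S hSo hSb ρS hρ Emap hE B hB hBb V hV
  have hKnn : (0:ℝ) ≤ (CB * Rη) ^ p * η 0 * C₀ ^ 2 :=
    mul_nonneg (mul_nonneg (Real.rpow_nonneg (by positivity) p) (hηnn 0)) (by positivity)
  -- Upper bound
  have hupper : (∫⁻ h, ∫⁻ θ in S,
        ENNReal.ofReal (|(inner ℝ (V θ) h : ℝ)| ^ p *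
          η (Real.sqrt (∫ x, ‖B θ h x‖ ^ 2 ∂Emap θ)) * ρS θ ^ 2)
        ∂volume ∂volume)
      ≤ ENNReal.ofReal c₂ * ∫⁻ θ in S, ENNReal.ofReal (‖V θ‖ ^ p) ∂volume := by
    have hstep : ∀ h : EuclideanSpace ℝ (Fin d),
        (∫⁻ θ in S, ENNReal.ofReal (|(inner ℝ (V θ) h : ℝ)| ^ p *
            η (Real.sqrt (∫ x, ‖B θ h x‖ ^ 2 ∂Emap θ)) * ρS θ ^ 2) ∂volume)
          ≤ (Metric.closedBall (0 : EuclideanSpace ℝ (Fin d)) (CB * Rη)).indicator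
              (fun _ => ENNReal.ofReal ((CB * Rη) ^ p * η 0 * C₀ ^ 2)) h *
            ∫⁻ θ in S, ENNReal.ofReal (‖V θ‖ ^ p) ∂volume := by
      intro h
      by_cases hh : ‖h‖ ≤ CB * Rη
      · rw [Set.indicator_of_mem (mem_closedBall_zero_iff.2 hh)]
        rw [← lintegral_const_mul' _ _ ENNReal.ofReal_ne_top]
        refine lintegral_mono_ae ?_
        rw [ae_restrict_iff' hSo.measurableSet]
        filter_upwards with θ hθ
        rw [← ENNReal.ofReal_mul hKnn]
        refine ENNReal.ofReal_le_ofReal ?_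
        obtain ⟨hρlo, hρhi⟩ := hρ θ hθ
        have hρ0 : 0 ≤ ρS θ := le_trans hc₀.le hρlo
        have hsq0 : 0 ≤ Real.sqrt (∫ x, ‖B θ h x‖ ^ 2 ∂Emap θ) := Real.sqrt_nonneg _
        have hη1 : η (Real.sqrt (∫ x, ‖B θ h x‖ ^ 2 ∂Emap θ)) ≤ η 0 :=
          hηanti Set.self_mem_Ici (Set.mem_Ici.2 hsq0) hsq0
        have hA : |(inner ℝ (V θ) h : ℝ)| ^ p ≤ (CB * Rη) ^ p * ‖V θ‖ ^ p := by
          rw [← Real.mul_rpow (by positivity) (norm_nonneg _)]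
          refine Real.rpow_le_rpow (abs_nonneg _) ?_ (by linarith)
          calc |(inner ℝ (V θ) h : ℝ)| ≤ ‖V θ‖ * ‖h‖ := abs_real_inner_le_norm _ _
            _ ≤ ‖V θ‖ * (CB * Rη) := mul_le_mul_of_nonneg_left hh (norm_nonneg _)
            _ = CB * Rη * ‖V θ‖ := mul_comm _ _
        have hAnn : 0 ≤ |(inner ℝ (V θ) h : ℝ)| ^ p := Real.rpow_nonneg (abs_nonneg _) p
        have hρ2 : ρS θ ^ 2 ≤ C₀ ^ 2 := pow_le_pow_left₀ hρ0 hρhi 2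
        calc |(inner ℝ (V θ) h : ℝ)| ^ p *
              η (Real.sqrt (∫ x, ‖B θ h x‖ ^ 2 ∂Emap θ)) * ρS θ ^ 2
            ≤ ((CB * Rη) ^ p * ‖V θ‖ ^ p) * η 0 * C₀ ^ 2 := by
              have h1 : |(inner ℝ (V θ) h : ℝ)| ^ p *
                  η (Real.sqrt (∫ x, ‖B θ h x‖ ^ 2 ∂Emap θ)) ≤
                  ((CB * Rη) ^ p * ‖V θ‖ ^ p) * η 0 :=
                mul_le_mul hA hη1 (hηnn _) (by positivity)
              exact mul_le_mul h1 hρ2 (sq_nonneg _)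
                (mul_nonneg (by positivity) (hηnn 0))
          _ = (CB * Rη) ^ p * η 0 * C₀ ^ 2 * ‖V θ‖ ^ p := by ring
      · push_neg at hh
        have hzero : ∀ᵐ θ ∂(volume.restrict S),
            ENNReal.ofReal (|(inner ℝ (V θ) h : ℝ)| ^ p *
              η (Real.sqrt (∫ x, ‖B θ h x‖ ^ 2 ∂Emap θ)) * ρS θ ^ 2) = 0 := by
          rw [ae_restrict_iff' hSo.measurableSet]
          filter_upwards with θ hθ
          have hlow := (hBb θ hθ h).1
          have hgt : Rη < Real.sqrt (∫ x, ‖B θ h x‖ ^ 2 ∂Emap θ) := by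
            refine lt_of_lt_of_le ?_ hlow
            calc Rη = CB⁻¹ * (CB * Rη) := by field_simp
              _ < CB⁻¹ * ‖h‖ := mul_lt_mul_of_pos_left hh (inv_pos.2 hCB0)
          rw [hηsupp _ hgt, mul_zero, zero_mul, ENNReal.ofReal_zero]
        calc (∫⁻ θ in S, ENNReal.ofReal (|(inner ℝ (V θ) h : ℝ)| ^ p *
              η (Real.sqrt (∫ x, ‖B θ h x‖ ^ 2 ∂Emap θ)) * ρS θ ^ 2) ∂volume)
            = 0 := by rw [lintegral_congr_ae hzero, lintegral_zero]
          _ ≤ _ := zero_le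
    calc (∫⁻ h, ∫⁻ θ in S,
          ENNReal.ofReal (|(inner ℝ (V θ) h : ℝ)| ^ p *
            η (Real.sqrt (∫ x, ‖B θ h x‖ ^ 2 ∂Emap θ)) * ρS θ ^ 2)
          ∂volume ∂volume)
        ≤ ∫⁻ h, (Metric.closedBall (0 : EuclideanSpace ℝ (Fin d)) (CB * Rη)).indicator
            (fun _ => ENNReal.ofReal ((CB * Rη) ^ p * η 0 * C₀ ^ 2)) h *
            (∫⁻ θ in S, ENNReal.ofReal (‖V θ‖ ^ p) ∂volume) ∂volume :=
          lintegral_mono hstep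
      _ = (∫⁻ h, (Metric.closedBall (0 : EuclideanSpace ℝ (Fin d)) (CB * Rη)).indicator
            (fun _ => ENNReal.ofReal ((CB * Rη) ^ p * η 0 * C₀ ^ 2)) h ∂volume) *
            (∫⁻ θ in S, ENNReal.ofReal (‖V θ‖ ^ p) ∂volume) :=
          lintegral_mul_const _ (measurable_const.indicator measurableSet_closedBall)
      _ = ENNReal.ofReal ((CB * Rη) ^ p * η 0 * C₀ ^ 2) *
            volume (Metric.closedBall (0 : EuclideanSpace ℝ (Fin d)) (CB * Rη)) *
            (∫⁻ θ in S, ENNReal.ofReal (‖V θ‖ ^ p) ∂volume) := by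
          rw [lintegral_indicator measurableSet_closedBall, setLIntegral_const]
      _ = ENNReal.ofReal c₂ * ∫⁻ θ in S, ENNReal.ofReal (‖V θ‖ ^ p) ∂volume := by
          rw [hc₂def, ENNReal.ofReal_mul hKnn,
            ENNReal.ofReal_toReal measure_closedBall_lt_top.ne]
  -- Lower bound
  have hlower : ENNReal.ofReal (min (c * κ.toReal) c₂) *
        (∫⁻ θ in S, ENNReal.ofReal (‖V θ‖ ^ p) ∂volume)
      ≤ ∫⁻ h, ∫⁻ θ in S,
          ENNReal.ofReal (|(inner ℝ (V θ) h : ℝ)| ^ p *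
            η (Real.sqrt (∫ x, ‖B θ h x‖ ^ 2 ∂Emap θ)) * ρS θ ^ 2)
          ∂volume ∂volume := by
    have hcmin : ENNReal.ofReal (min (c * κ.toReal) c₂) ≤ ENNReal.ofReal c * κ := by
      calc ENNReal.ofReal (min (c * κ.toReal) c₂)
          ≤ ENNReal.ofReal (c * κ.toReal) := ENNReal.ofReal_le_ofReal (min_le_left _ _)
        _ = ENNReal.ofReal c * ENNReal.ofReal κ.toReal := ENNReal.ofReal_mul hcpos.le
        _ = ENNReal.ofReal c * κ := by rw [ENNReal.ofReal_toReal hκtop]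
    have hmeas2 : Measurable (Function.uncurry
        fun (h θ : EuclideanSpace ℝ (Fin d)) =>
          ENNReal.ofReal (c * |(inner ℝ (V θ) h : ℝ)| ^ p)) := by
      exact ((((hV.comp measurable_snd).inner measurable_fst).abs.pow
        measurable_const).const_mul c).ennreal_ofReal
    have hswap : ∫⁻ h in Metric.ball (0 : EuclideanSpace ℝ (Fin d)) r, ∫⁻ θ in S,
          ENNReal.ofReal (c * |(inner ℝ (V θ) h : ℝ)| ^ p) ∂volume ∂volume
        = ∫⁻ θ in S, ∫⁻ h in Metric.ball (0 : EuclideanSpace ℝ (Fin d)) r,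
          ENNReal.ofReal (c * |(inner ℝ (V θ) h : ℝ)| ^ p) ∂volume ∂volume :=
      lintegral_lintegral_swap hmeas2.aemeasurable
    have hper : ∀ θ : EuclideanSpace ℝ (Fin d),
        ∫⁻ h in Metric.ball (0 : EuclideanSpace ℝ (Fin d)) r,
          ENNReal.ofReal (c * |(inner ℝ (V θ) h : ℝ)| ^ p) ∂volume
        = (ENNReal.ofReal c * κ) * ENNReal.ofReal (‖V θ‖ ^ p) := by
      intro θ
      calc ∫⁻ h in Metric.ball (0 : EuclideanSpace ℝ (Fin d)) r,
            ENNReal.ofReal (c * |(inner ℝ (V θ) h : ℝ)| ^ p) ∂volume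
          = ∫⁻ h in Metric.ball (0 : EuclideanSpace ℝ (Fin d)) r,
              ENNReal.ofReal c * ENNReal.ofReal (|(inner ℝ (V θ) h : ℝ)| ^ p) ∂volume :=
            lintegral_congr fun h => ENNReal.ofReal_mul hcpos.le
        _ = ENNReal.ofReal c * ∫⁻ h in Metric.ball (0 : EuclideanSpace ℝ (Fin d)) r,
              ENNReal.ofReal (|(inner ℝ (V θ) h : ℝ)| ^ p) ∂volume :=
            lintegral_const_mul' _ _ ENNReal.ofReal_ne_top
        _ = ENNReal.ofReal c * (ENNReal.ofReal (‖V θ‖ ^ p) * κ) := by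
            rw [aux_inner_scale p r hp he (V θ), hκdef]
        _ = (ENNReal.ofReal c * κ) * ENNReal.ofReal (‖V θ‖ ^ p) := by ring
    have hstep : ∀ h : EuclideanSpace ℝ (Fin d),
        (Metric.ball (0 : EuclideanSpace ℝ (Fin d)) r).indicator
            (fun h' => ∫⁻ θ in S,
              ENNReal.ofReal (c * |(inner ℝ (V θ) h' : ℝ)| ^ p) ∂volume) h
          ≤ ∫⁻ θ in S, ENNReal.ofReal (|(inner ℝ (V θ) h : ℝ)| ^ p *
              η (Real.sqrt (∫ x, ‖B θ h x‖ ^ 2 ∂Emap θ)) * ρS θ ^ 2) ∂volume := by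
      intro h
      by_cases hh : h ∈ Metric.ball (0 : EuclideanSpace ℝ (Fin d)) r
      · rw [Set.indicator_of_mem hh]
        refine lintegral_mono_ae ?_
        rw [ae_restrict_iff' hSo.measurableSet]
        filter_upwards with θ hθ
        obtain ⟨hρlo, hρhi⟩ := hρ θ hθ
        have hhr : ‖h‖ < r := mem_ball_zero_iff.1 hh
        have hup := (hBb θ hθ h).2
        have hsq0 : 0 ≤ Real.sqrt (∫ x, ‖B θ h x‖ ^ 2 ∂Emap θ) := Real.sqrt_nonneg _
        have hsqr : Real.sqrt (∫ x, ‖B θ h x‖ ^ 2 ∂Emap θ) ≤ r₀ := by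
          refine le_trans hup ?_
          calc CB * ‖h‖ ≤ CB * r := mul_le_mul_of_nonneg_left hhr.le hCB0.le
            _ = r₀ := by rw [hrdef]; field_simp
        have hηg : η 0 / 2 ≤ η (Real.sqrt (∫ x, ‖B θ h x‖ ^ 2 ∂Emap θ)) :=
          hr₀ _ hsq0 hsqr
        refine ENNReal.ofReal_le_ofReal ?_
        have hAnn : 0 ≤ |(inner ℝ (V θ) h : ℝ)| ^ p := Real.rpow_nonneg (abs_nonneg _) p
        have hρ2 : c₀ ^ 2 ≤ ρS θ ^ 2 := pow_le_pow_left₀ hc₀.le hρlo 2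
        calc c * |(inner ℝ (V θ) h : ℝ)| ^ p
            = |(inner ℝ (V θ) h : ℝ)| ^ p * (η 0 / 2) * c₀ ^ 2 := by rw [hcdef]; ring
          _ ≤ |(inner ℝ (V θ) h : ℝ)| ^ p *
                η (Real.sqrt (∫ x, ‖B θ h x‖ ^ 2 ∂Emap θ)) * ρS θ ^ 2 := by
              refine mul_le_mul (mul_le_mul_of_nonneg_left hηg hAnn) hρ2
                (by positivity) ?_
              exact mul_nonneg hAnn (hηnn _)
      · rw [Set.indicator_of_notMem hh]; exact zero_le
    calc ENNReal.ofReal (min (c * κ.toReal) c₂) *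
          (∫⁻ θ in S, ENNReal.ofReal (‖V θ‖ ^ p) ∂volume)
        ≤ (ENNReal.ofReal c * κ) *
            (∫⁻ θ in S, ENNReal.ofReal (‖V θ‖ ^ p) ∂volume) :=
          mul_le_mul_left hcmin _
      _ = ∫⁻ θ in S, (ENNReal.ofReal c * κ) * ENNReal.ofReal (‖V θ‖ ^ p) ∂volume :=
          (lintegral_const_mul' _ _
            (ENNReal.mul_ne_top ENNReal.ofReal_ne_top hκtop)).symm
      _ = ∫⁻ θ in S, ∫⁻ h in Metric.ball (0 : EuclideanSpace ℝ (Fin d)) r,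
            ENNReal.ofReal (c * |(inner ℝ (V θ) h : ℝ)| ^ p) ∂volume ∂volume :=
          lintegral_congr fun θ => (hper θ).symm
      _ = ∫⁻ h in Metric.ball (0 : EuclideanSpace ℝ (Fin d)) r, ∫⁻ θ in S,
            ENNReal.ofReal (c * |(inner ℝ (V θ) h : ℝ)| ^ p) ∂volume ∂volume := hswap.symm
      _ = ∫⁻ h, (Metric.ball (0 : EuclideanSpace ℝ (Fin d)) r).indicator
            (fun h' => ∫⁻ θ in S,
              ENNReal.ofReal (c * |(inner ℝ (V θ) h' : ℝ)| ^ p) ∂volume) h ∂volume :=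
          (lintegral_indicator measurableSet_ball _).symm
      _ ≤ ∫⁻ h, ∫⁻ θ in S,
            ENNReal.ofReal (|(inner ℝ (V θ) h : ℝ)| ^ p *
              η (Real.sqrt (∫ x, ‖B θ h x‖ ^ 2 ∂Emap θ)) * ρS θ ^ 2)
            ∂volume ∂volume := lintegral_mono hstep
  refine ⟨hlower, hupper, ?_, ?_⟩
  · intro hfin
    by_contra hI
    apply hfin
    have htop : ENNReal.ofReal (min (c * κ.toReal) c₂) *
        (∫⁻ θ in S, ENNReal.ofReal (‖V θ‖ ^ p) ∂volume) = ⊤ := by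
      rw [hI, ENNReal.mul_top]
      exact (ENNReal.ofReal_pos.2 hc₁pos).ne'
    exact eq_top_iff.2 (htop ▸ hlower)
  · intro hI
    exact ne_top_of_le_ne_top (ENNReal.mul_ne_top ENNReal.ofReal_ne_top hI) hupper
end
end
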